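/- arXiv:1203.0379 — 7 statements merged into one kernel-verified Lean document; each statement's English description precedes it below -/
import Mathlib

section
/- Let G be a simple graph of order m·t (t a positive integer) with chromatic number χ ≤ m. If the number of edges of G is at most (m−1)·t, then G has an equitable m-coloring, i.e., a proper vertex coloring with m colors in which the sizes of any two color classes differ by at most 1. -/
/-!
Take a proper colouring minimising the sum of squares of the class sizes. Call class `j`
reachable in one step from class `i` if some vertex of `i` has no neighbour in `j`. Along a
duplicate-free chain of such steps from `i` to `j`, moving one vertex forward at every step keeps
the colouring proper and transfers a single vertex from `i` to `j`; so minimality forces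
`|i| ≤ |j| + 1` whenever `j` is reachable from `i`.

If some class `B` had fewer than `t` vertices, let `R` be the set of classes from which `B` is
reachable. Its classes have at most `t` vertices and `B` fewer, so more than `(m - |R|) t`
vertices lie outside `R`, and each of them has a neighbour in every class of `R` (otherwise its
own class would reach `B`). That gives at least `|R| ((m - |R|) t + 1) > (m - 1) t` edges, since
`1 ≤ |R| < m`. Hence every class has exactly `t` vertices.
-/

open Finset

/-- `G` is equitably `k`-colorable: there is a proper `k`-coloring whose color
classes pairwise differ in size by at most `1`. -/
def EquitablyColorable {V : Type*} [Fintype V] (G : SimpleGraph V) (k : ℕ) : Prop :=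
  ∃ C : V → Fin k, (∀ a b, G.Adj a b → C a ≠ C b) ∧
    ∀ i j : Fin k,
      (Finset.univ.filter fun v => C v = i).card ≤
        (Finset.univ.filter fun v => C v = j).card + 1

theorem List.exists_nodup_isChain_cons_of_relationReflTransGen {α : Type*} {r : α → α → Prop}
    {a b : α} (h : Relation.ReflTransGen r a b) :
    ∃ l, IsChain r (a :: l) ∧ getLast (a :: l) (cons_ne_nil _ _) = b ∧ (a :: l).Nodup := by
  refine Relation.ReflTransGen.head_induction_on h ⟨[], .singleton _, rfl, nodup_singleton _⟩ ?_
  rintro a c hac - ⟨l, hl, rfl, hnd⟩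
  by_cases ha : a ∈ c :: l
  · obtain ⟨s, l', hs⟩ := append_of_mem ha
    simp only [hs] at hl hnd ⊢
    exact ⟨l', hl.right_of_append, (getLast_append_of_ne_nil _ _).symm, hnd.of_append_right⟩
  · exact ⟨c :: l, hl.cons_cons hac, getLast_cons_cons .., nodup_cons.2 ⟨ha, hnd⟩⟩

theorem sum_sq_lt_of_add_single_eq {ι : Type*} [Fintype ι] [DecidableEq ι] {f f' : ι → ℕ}
    {i j : ι} (h : f' + Pi.single i 1 = f + Pi.single j 1) (hij : f j + 2 ≤ f i) :
    ∑ k, f' k ^ 2 < ∑ k, f k ^ 2 := by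
  have hne : i ≠ j := by rintro rfl; omega
  have hk (k : ι) := congrFun h k
  simp only [Pi.add_apply, Pi.single_apply] at hk
  have hi := hk i
  have hj := hk j
  simp only [if_true, if_neg hne, if_neg hne.symm] at hi hj
  rw [← sum_add_sum_compl {i, j}, ← sum_add_sum_compl {i, j} (fun k => f k ^ 2),
    sum_pair hne, sum_pair hne, sum_congr rfl fun k hk' => by
      simp only [mem_compl, mem_insert, mem_singleton, not_or] at hk'
      simpa [hk'.1, hk'.2] using congrArg (· ^ 2) (hk k)]
  nlinarith

namespace EquitableColoring

section

variable {V ι : Type*}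

def IsProper (G : SimpleGraph V) (c : V → ι) : Prop :=
  ∀ a b, G.Adj a b → c a ≠ c b

def CanShift (G : SimpleGraph V) (c : V → ι) (i j : ι) : Prop :=
  ∃ v, c v = i ∧ ∀ u, c u = j → ¬ G.Adj v u

theorem IsProper.update [DecidableEq V] {G : SimpleGraph V} {c : V → ι} (hc : IsProper G c)
    {v : V} {j : ι} (hv : ∀ u, c u = j → ¬ G.Adj v u) :
    IsProper G (Function.update c v j) := by
  intro a b hab
  simp only [Function.update_apply]
  split_ifs with ha hb hb
  · exact absurd (ha ▸ hb ▸ hab) G.irrefl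
  · exact fun h => hv b h.symm (ha ▸ hab)
  · exact fun h => hv a h (hb ▸ hab.symm)
  · exact hc a b hab

theorem card_mul_card_le_card_edgeFinset [Fintype V] {G : SimpleGraph V} [DecidableRel G.Adj]
    (c : V → ι) {s : Finset V} {R : Finset ι} (hs : ∀ u ∈ s, c u ∉ R)
    (hadj : ∀ u ∈ s, ∀ i ∈ R, ∃ w, c w = i ∧ G.Adj u w) :
    #s * #R ≤ #G.edgeFinset := by
  choose! w hw using hadj
  rw [← card_product]
  refine card_le_card_of_injOn (fun p => s(p.1, w p.1 p.2)) (fun p hp => ?_) ?_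
  · obtain ⟨hu, hi⟩ := mem_product.1 hp
    simpa using (hw _ hu _ hi).2
  · rintro ⟨u, i⟩ hp ⟨u', i'⟩ hq hpq
    dsimp only at hpq
    obtain ⟨hu, hi⟩ := mem_product.1 hp
    obtain ⟨hu', hi'⟩ := mem_product.1 hq
    dsimp only at hu hi hu' hi'
    rcases Sym2.eq_iff.1 hpq with ⟨rfl, hw'⟩ | ⟨rfl, -⟩
    · have hii' := congrArg c hw'
      rw [(hw _ hu _ hi).1, (hw _ hu' _ hi').1] at hii'
      rw [hii']
    · exact absurd (by rwa [(hw _ hu' _ hi').1]) (hs _ hu)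

end

section

variable {V ι : Type*} [Fintype V] [DecidableEq ι]

def classSize (c : V → ι) (i : ι) : ℕ := #{v | c v = i}

def potential [Fintype ι] (c : V → ι) : ℕ := ∑ i, classSize c i ^ 2

theorem classSize_update_add_single [DecidableEq V] (c : V → ι) (v : V) (j : ι) :
    classSize (Function.update c v j) + Pi.single (c v) 1 = classSize c + Pi.single j 1 := by
  ext k
  simp only [classSize, Pi.add_apply, card_filter, Pi.single_apply]
  rw [← add_sum_erase _ _ (mem_univ v), ← add_sum_erase _ _ (mem_univ v),
    sum_congr rfl fun u hu => by rw [Function.update_of_ne (ne_of_mem_erase hu)]]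
  grind

theorem exists_isProper_of_isChain [DecidableEq V] {G : SimpleGraph V} {c : V → ι}
    (hc : IsProper G c) (i : ι) (l : List ι) (hl : (i :: l).IsChain (CanShift G c))
    (hnd : (i :: l).Nodup) :
    ∃ c', IsProper G c' ∧
      classSize c' + Pi.single i 1 = classSize c + Pi.single ((i :: l).getLast (by simp)) 1 ∧
      -- invariant for the induction: recolouring only moves vertices forward along the chain
      ∀ u, c' u ≠ c u → c u ∈ i :: l ∧ c' u ∈ l := by
  induction l generalizing i with
  | nil => exact ⟨c, hc, rfl, fun u h => absurd rfl h⟩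
  | cons j l ih =>
    obtain ⟨⟨v, hvi, hv⟩, htail⟩ := List.isChain_cons_cons.1 hl
    obtain ⟨hi, hnd'⟩ := List.nodup_cons.1 hnd
    obtain ⟨c', hc', hsize, hchg⟩ := ih j htail hnd'
    have hc'v : c' v = i := by
      by_contra h
      exact hi (hvi ▸ (hchg v (hvi ▸ h)).1)
    have hj : ∀ u, c' u = j → c u = j := fun u hu => by
      by_contra h
      exact (List.nodup_cons.1 hnd').1 (hu ▸ (hchg u (hu ▸ Ne.symm h)).2)
    refine ⟨Function.update c' v j, hc'.update fun u hu => hv u (hj u hu), ?_, fun u hu => ?_⟩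
    · rw [List.getLast_cons_cons, ← hsize, ← hc'v, classSize_update_add_single]
    · by_cases huv : u = v
      · subst huv
        simp [hvi]
      · rw [Function.update_of_ne huv] at hu ⊢
        obtain ⟨hcu, hc'u⟩ := hchg u hu
        exact ⟨List.mem_cons_of_mem _ hcu, List.mem_cons_of_mem _ hc'u⟩

theorem sum_classSize (c : V → ι) (s : Finset ι) :
    ∑ i ∈ s, classSize c i = #{v | c v ∈ s} := by
  simp only [classSize, card_filter]
  rw [sum_comm]
  simp

theorem classSize_le_of_reflTransGen [Fintype ι] [DecidableEq V] {G : SimpleGraph V}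
    {c : V → ι} (hc : IsProper G c)
    (hmin : ∀ c' : V → ι, IsProper G c' → potential c ≤ potential c') {i j : ι}
    (h : Relation.ReflTransGen (CanShift G c) i j) :
    classSize c i ≤ classSize c j + 1 := by
  by_contra! hij
  obtain ⟨l, hl, hlast, hnd⟩ := List.exists_nodup_isChain_cons_of_relationReflTransGen h
  obtain ⟨c', hc', hsize, -⟩ := exists_isProper_of_isChain hc i l hl hnd
  rw [hlast] at hsize
  exact (hmin c' hc').not_gt (sum_sq_lt_of_add_single_eq hsize hij)

theorem lt_card_edgeFinset_of_classSize_lt [Fintype ι] [DecidableEq V] {G : SimpleGraph V}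
    [DecidableRel G.Adj] {c : V → ι} (hc : IsProper G c)
    (hmin : ∀ c' : V → ι, IsProper G c' → potential c ≤ potential c') {t : ℕ}
    (hcard : Fintype.card V = Fintype.card ι * t) {j : ι} (hj : classSize c j < t) :
    (Fintype.card ι - 1) * t < #G.edgeFinset := by
  classical
  set R : Finset ι := {i | Relation.ReflTransGen (CanShift G c) i j}
  set out : Finset V := {u | c u ∉ R}
  have hjR : j ∈ R := mem_filter.2 ⟨mem_univ _, .refl⟩
  have hR : ∑ i ∈ R, classSize c i < #R * t :=
    calc ∑ i ∈ R, classSize c i < ∑ _i ∈ R, t :=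
          sum_lt_sum (fun i hi => (classSize_le_of_reflTransGen hc hmin
            (mem_filter.1 hi).2).trans hj) ⟨j, hjR, hj⟩
      _ = #R * t := by simp
  have hsplit : ∑ i ∈ R, classSize c i + #out = Fintype.card ι * t := by
    rw [sum_classSize, card_filter_add_card_filter_not, card_univ, hcard]
  have hadj : ∀ u ∈ out, ∀ i ∈ R, ∃ w, c w = i ∧ G.Adj u w := by
    intro u hu i hi
    by_contra! h
    exact (mem_filter.1 hu).2 <|
      mem_filter.2 ⟨mem_univ _, .head ⟨u, rfl, h⟩ (mem_filter.1 hi).2⟩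
  have hedges : #out * #R ≤ #G.edgeFinset :=
    card_mul_card_le_card_edgeFinset c (fun u hu => (mem_filter.1 hu).2) hadj
  have hRle : #R ≤ Fintype.card ι := card_le_univ R
  obtain ⟨u, hu⟩ : out.Nonempty := card_pos.1 (by nlinarith)
  have hRlt : #R < Fintype.card ι := card_lt_univ_of_notMem (mem_filter.1 hu).2
  have hR1 : 1 ≤ #R := card_pos.2 ⟨j, hjR⟩
  obtain ⟨r, hr⟩ := Nat.exists_eq_add_of_lt hRlt
  have hout : (r + 1) * t < #out := by rw [hr] at hsplit; nlinarith
  rw [hr, Nat.add_sub_cancel]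
  nlinarith [Nat.mul_le_mul_left #R hout, Nat.mul_le_mul_right (r * t) hR1]

end

end EquitableColoring

open EquitableColoring

theorem stmt0_general {V : Type*} [Fintype V] (G : SimpleGraph V) [DecidableRel G.Adj]
    (m t : ℕ)
    (hcard : Fintype.card V = m * t)
    (hchrom : G.chromaticNumber ≤ m)
    (hsize : G.edgeFinset.card ≤ (m - 1) * t) :
    EquitablyColorable G m := by
  classical
  obtain ⟨C⟩ := SimpleGraph.chromaticNumber_le_iff_colorable.1 hchrom
  obtain ⟨c, hc, hmin⟩ := (measure (potential : (V → Fin m) → ℕ)).wf.has_min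
    {c | IsProper G c} ⟨C, fun _ _ h => C.valid h⟩
  have hge (i : Fin m) : t ≤ classSize c i := by
    by_contra! hi
    have := lt_card_edgeFinset_of_classSize_lt hc (fun c' hc' => not_lt.1 (hmin c' hc'))
      (by rwa [Fintype.card_fin]) hi
    rw [Fintype.card_fin] at this
    omega
  have hsum : ∑ _i : Fin m, t = ∑ i, classSize c i := by simp [sum_classSize, hcard]
  have heq (i : Fin m) : classSize c i = t :=
    ((sum_eq_sum_iff_of_le fun i _ => hge i).1 hsum i (mem_univ i)).symm
  exact ⟨c, hc, fun i j => (heq i).trans_le ((heq j).ge.trans (Nat.le_succ _))⟩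

theorem stmt0 {V : Type*} [Fintype V] (G : SimpleGraph V) [DecidableRel G.Adj]
    (m t : ℕ) (hm : 1 ≤ m) (ht : 1 ≤ t)
    (hcard : Fintype.card V = m * t)
    (hchrom : G.chromaticNumber ≤ m)
    (hsize : G.edgeFinset.card ≤ (m - 1) * t) :
    EquitablyColorable G m :=
  stmt0_general G m t hcard hchrom hsize
end

section
/- Let G be a simple graph containing an independent set V' of size s, and let U ⊆ V(G) \ V' be a set of vertices each having at least one neighbor in V'. If e(G[U]) + e(V', U) < 2|U| − s, then U contains two nonadjacent vertices α and β that each have exactly one neighbor in V', and that neighbor is the same vertex γ ∈ V'. -/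
open Finset

open scoped Classical in
/-- The number of edges of `G` with both endpoints in `U` (edges of `G[U]`). -/
noncomputable def edgesWithin {V : Type*} [Fintype V] (G : SimpleGraph V) (U : Finset V) : ℕ :=
  (G.edgeFinset.filter fun e => ∀ v ∈ e, v ∈ U).card

open scoped Classical in
/-- The number of edges of `G` with one endpoint in `X` and the other in `Y`
(for disjoint `X`, `Y`). -/
noncomputable def edgesBetween {V : Type*} [Fintype V] (G : SimpleGraph V)
    (X Y : Finset V) : ℕ :=
  ((X ×ˢ Y).filter fun p => G.Adj p.1 p.2).card

private lemma card_filter_prod {V : Type*} [Fintype V] [DecidableEq V] (G : SimpleGraph V)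
    [DecidableRel G.Adj] (V' U : Finset V) :
    ((V' ×ˢ U).filter fun p => G.Adj p.1 p.2).card
      = ∑ u ∈ U, (V'.filter fun v => G.Adj u v).card := by
  rw [Finset.card_eq_sum_card_fiberwise (f := Prod.snd) (t := U)
    (fun p hp => (mem_product.1 (mem_filter.1 hp).1).2)]
  refine Finset.sum_congr rfl fun u hu => ?_
  rw [Finset.filter_filter]
  have : ((V' ×ˢ U).filter fun p => G.Adj p.1 p.2 ∧ p.2 = u)
      = (V'.filter fun v => G.Adj u v).image (fun v => (v, u)) := by
    ext ⟨a, b⟩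
    simp only [mem_filter, mem_product, mem_image]
    constructor
    · rintro ⟨⟨ha, hb⟩, hadj, rfl⟩
      exact ⟨a, ⟨ha, (G.adj_comm _ _).1 hadj⟩, rfl⟩
    · rintro ⟨v, ⟨hv, hadj⟩, h⟩
      obtain ⟨rfl, rfl⟩ := Prod.mk.injEq .. |>.mp h
      exact ⟨⟨hv, hu⟩, (G.adj_comm _ _).1 hadj, rfl⟩
  rw [this, card_image_of_injective _ (fun x y h => ((Prod.mk.injEq _ _ _ _).mp h).1)]

theorem stmt2 {V : Type*} [Fintype V] [DecidableEq V] (G : SimpleGraph V)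
    [DecidableRel G.Adj]
    (V' U : Finset V) (s : ℕ) (hs : V'.card = s)
    (hindep : ∀ a ∈ V', ∀ b ∈ V', a ≠ b → ¬ G.Adj a b)
    (hUV' : Disjoint U V')
    (hnb : ∀ u ∈ U, ∃ v ∈ V', G.Adj u v)
    (hcount : (edgesWithin G U : ℤ) + edgesBetween G V' U < 2 * U.card - s) :
    ∃ α ∈ U, ∃ β ∈ U, α ≠ β ∧ ¬ G.Adj α β ∧
      ∃ γ ∈ V', (∀ v ∈ V', (G.Adj α v ↔ v = γ)) ∧ (∀ v ∈ V', (G.Adj β v ↔ v = γ)) := by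
  classical
  by_contra hcon
  -- degree into V'
  set d : V → ℕ := fun u => (V'.filter fun v => G.Adj u v).card with hd
  set W : Finset V := U.filter (fun u => d u = 1) with hW
  have hWU : W ⊆ U := filter_subset _ _
  -- the unique-neighbor function
  set f : V → V := fun u => if h : ∃ v, v ∈ V' ∧ G.Adj u v then h.choose else u with hf
  have hfmem : ∀ u ∈ U, f u ∈ V' ∧ G.Adj u (f u) := by
    intro u hu
    obtain ⟨v, hv, hadj⟩ := hnb u hu
    have hex : ∃ v, v ∈ V' ∧ G.Adj u v := ⟨v, hv, hadj⟩
    simp only [hf, dif_pos hex]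
    exact hex.choose_spec
  have hkey : ∀ u ∈ W, ∀ v ∈ V', (G.Adj u v ↔ v = f u) := by
    intro u hu v hv
    have hu' : u ∈ U := hWU hu
    have hda : d u = 1 := (mem_filter.1 hu).2
    obtain ⟨a, ha⟩ := Finset.card_eq_one.1 hda
    have hfu : f u ∈ V'.filter fun v => G.Adj u v := by
      simp only [mem_filter]
      exact ⟨(hfmem u hu').1, (hfmem u hu').2⟩
    rw [ha, mem_singleton] at hfu
    constructor
    · intro hadj
      have : v ∈ V'.filter fun v => G.Adj u v := mem_filter.2 ⟨hv, hadj⟩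
      rw [ha, mem_singleton] at this
      rw [this, hfu]
    · rintro rfl
      exact (hfmem u hu').2
  -- adjacency within fibers
  have hadjfib : ∀ u ∈ W, ∀ w ∈ W, f u = f w → u ≠ w → G.Adj u w := by
    intro u hu w hw hfe hne
    by_contra hn
    refine hcon ⟨u, hWU hu, w, hWU hw, hne, hn, f u, (hfmem u (hWU hu)).1, hkey u hu, ?_⟩
    intro v hv
    rw [hkey w hw v hv, hfe]
  -- bound on edgesBetween
  have hEBsum : edgesBetween G V' U = ∑ u ∈ U, d u := by
    rw [edgesBetween, ← card_filter_prod G V' U]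
    congr!
  have hd1 : ∀ u ∈ U, 1 ≤ d u := by
    intro u hu
    obtain ⟨v, hv, hadj⟩ := hnb u hu
    exact Finset.card_pos.2 ⟨v, mem_filter.2 ⟨hv, hadj⟩⟩
  have hsplit : ∑ u ∈ U, d u = ∑ u ∈ W, d u + ∑ u ∈ U.filter (fun u => ¬ d u = 1), d u := by
    rw [hW]
    exact (Finset.sum_filter_add_sum_filter_not U _ d).symm
  have hlow1 : W.card ≤ ∑ u ∈ W, d u := by
    simpa using Finset.card_nsmul_le_sum W d 1 (fun u hu => hd1 u (hWU hu))
  have hlow2 : (U.filter (fun u => ¬ d u = 1)).card * 2 ≤ ∑ u ∈ U.filter (fun u => ¬ d u = 1), d u := by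
    have := Finset.card_nsmul_le_sum (U.filter (fun u => ¬ d u = 1)) d 2 (fun u hu => by
      have h1 := hd1 u (mem_filter.1 hu).1
      have h2 := (mem_filter.1 hu).2
      omega)
    simpa [smul_eq_mul, mul_comm] using this
  have hcards : W.card + (U.filter (fun u => ¬ d u = 1)).card = U.card := by
    rw [hW]
    exact Finset.card_filter_add_card_filter_not _
  have hEB : 2 * U.card ≤ edgesBetween G V' U + W.card := by
    rw [hEBsum, hsplit]; omega
  -- bound on edgesWithin: representatives
  set T : Finset V := W.image f with hT
  set rep : V → V := fun γ => if h : (W.filter fun u => f u = γ).Nonempty then h.choose else γ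
    with hrep
  have hrepmem : ∀ γ ∈ T, rep γ ∈ W ∧ f (rep γ) = γ := by
    intro γ hγ
    obtain ⟨u, hu, hfu⟩ := mem_image.1 hγ
    have hne : (W.filter fun w => f w = γ).Nonempty := ⟨u, mem_filter.2 ⟨hu, hfu⟩⟩
    simp only [hrep, dif_pos hne]
    exact ⟨(mem_filter.1 hne.choose_spec).1, (mem_filter.1 hne.choose_spec).2⟩
  set R : Finset V := T.image rep with hR
  have hRcard : R.card ≤ s := by
    calc R.card ≤ T.card := Finset.card_image_le
    _ ≤ V'.card := Finset.card_le_card (by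
        intro γ hγ
        obtain ⟨u, hu, hfu⟩ := mem_image.1 hγ
        exact hfu ▸ (hfmem u (hWU hu)).1)
    _ = s := hs
  -- the injection into edges within U
  have hinj : ∀ u ∈ W \ R, (s(u, rep (f u)) ∈ G.edgeFinset.filter fun e => ∀ v ∈ e, v ∈ U) := by
    intro u hu
    obtain ⟨huW, huR⟩ := mem_sdiff.1 hu
    have hfuT : f u ∈ T := mem_image.2 ⟨u, huW, rfl⟩
    obtain ⟨hrW, hrf⟩ := hrepmem (f u) hfuT
    have hner : u ≠ rep (f u) := by
      intro heq
      exact huR (by rw [heq]; exact mem_image.2 ⟨f u, hfuT, rfl⟩)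
    have hadj : G.Adj u (rep (f u)) := hadjfib u huW _ hrW hrf.symm hner
    simp only [mem_filter, SimpleGraph.mem_edgeFinset, SimpleGraph.mem_edgeSet, Sym2.mem_iff]
    refine ⟨hadj, fun v hv => ?_⟩
    rcases hv with rfl | rfl
    · exact hWU huW
    · exact hWU hrW
  have hEWinj : (W \ R).card ≤ (G.edgeFinset.filter fun e => ∀ v ∈ e, v ∈ U).card := by
    apply Finset.card_le_card_of_injOn (fun u => s(u, rep (f u))) hinj
    intro u hu w hw he
    rcases Sym2.eq_iff.1 he with ⟨h1, _⟩ | ⟨h1, h2⟩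
    · exact h1
    · exfalso
      have hfwT : f w ∈ T := mem_image.2 ⟨w, (mem_sdiff.1 hw).1, rfl⟩
      exact (mem_sdiff.1 hu).2 (h1 ▸ mem_image.2 ⟨f w, hfwT, rfl⟩)
  have hEW : W.card ≤ edgesWithin G U + s := by
    have h1 : W.card ≤ (W \ R).card + R.card := Finset.card_le_card_sdiff_add_card
    have h2 : edgesWithin G U = (G.edgeFinset.filter fun e => ∀ v ∈ e, v ∈ U).card := by
      rw [edgesWithin]; congr!
    omega
  have hWle : W.card ≤ U.card := Finset.card_le_card hWU
  omega
end

section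
/- Let G be a triangle-free simple graph with maximum degree Δ. Suppose G has an independent set V' of size s, and there exists U ⊆ V(G) \ V' with |U| > s(1+Δ)/2 such that every vertex of U has at least one neighbor in V'. Then U contains two nonadjacent vertices α and β that each have exactly one neighbor in V', and that neighbor is the same vertex γ ∈ V'. -/
open Finset

theorem stmt3 {V : Type*} [Fintype V] [DecidableEq V] (G : SimpleGraph V)
    [DecidableRel G.Adj]
    (htf : G.CliqueFree 3)
    (V' U : Finset V) (s : ℕ) (hs : V'.card = s)
    (hindep : ∀ a ∈ V', ∀ b ∈ V', a ≠ b → ¬ G.Adj a b)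
    (hUV' : Disjoint U V')
    (hnb : ∀ u ∈ U, ∃ v ∈ V', G.Adj u v)
    (hbig : s * (1 + G.maxDegree) < 2 * U.card) :
    ∃ α ∈ U, ∃ β ∈ U, α ≠ β ∧ ¬ G.Adj α β ∧
      ∃ γ ∈ V', (∀ v ∈ V', (G.Adj α v ↔ v = γ)) ∧ (∀ v ∈ V', (G.Adj β v ↔ v = γ)) := by
  classical
  set Δ := G.maxDegree with hΔ
  set d : V → ℕ := fun u => (V'.filter (fun v => G.Adj u v)).card with hd
  -- total edge count between U and V' is at most s * Δ
  have hsum_le : ∑ u ∈ U, d u ≤ s * Δ := by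
    have h1 : ∑ u ∈ U, d u = ∑ v ∈ V', (U.filter (fun u => G.Adj u v)).card := by
      simp only [hd, Finset.card_filter]
      rw [Finset.sum_comm]
    rw [h1, ← hs]
    calc ∑ v ∈ V', (U.filter (fun u => G.Adj u v)).card
        ≤ ∑ _v ∈ V', Δ := by
          apply Finset.sum_le_sum
          intro v _
          calc (U.filter (fun u => G.Adj u v)).card
              ≤ (G.neighborFinset v).card := by
                apply Finset.card_le_card
                intro u hu
                simp only [Finset.mem_filter] at hu
                simpa [SimpleGraph.mem_neighborFinset] using hu.2.symm
            _ = G.degree v := rfl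
            _ ≤ Δ := G.degree_le_maxDegree v
      _ = V'.card * Δ := by rw [Finset.sum_const, smul_eq_mul]
  set U1 : Finset V := U.filter (fun u => d u = 1) with hU1
  have hdpos : ∀ u ∈ U, 1 ≤ d u := by
    intro u hu
    obtain ⟨v, hv, hadj⟩ := hnb u hu
    have : v ∈ V'.filter (fun v => G.Adj u v) := Finset.mem_filter.mpr ⟨hv, hadj⟩
    exact Finset.card_pos.mpr ⟨v, this⟩
  -- lower bound on the sum
  have hsum_ge : 2 * U.card ≤ U1.card + ∑ u ∈ U, d u := by
    have hsplit : ∑ u ∈ U, d u = ∑ u ∈ U1, d u + ∑ u ∈ U.filter (fun u => ¬ d u = 1), d u :=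
      (Finset.sum_filter_add_sum_filter_not U (fun u => d u = 1) d).symm
    have h1 : ∑ u ∈ U1, d u = U1.card := by
      rw [Finset.card_eq_sum_ones]
      exact Finset.sum_congr rfl fun u hu => (Finset.mem_filter.mp hu).2
    have h2 : 2 * (U.filter (fun u => ¬ d u = 1)).card
        ≤ ∑ u ∈ U.filter (fun u => ¬ d u = 1), d u := by
      calc 2 * (U.filter (fun u => ¬ d u = 1)).card
          = ∑ _u ∈ U.filter (fun u => ¬ d u = 1), 2 := by
            rw [Finset.sum_const, smul_eq_mul, mul_comm]
        _ ≤ _ := by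
            apply Finset.sum_le_sum
            intro u hu
            obtain ⟨huU, hne⟩ := Finset.mem_filter.mp hu
            have := hdpos u huU
            omega
    have hcard : U1.card + (U.filter (fun u => ¬ d u = 1)).card = U.card :=
      Finset.card_filter_add_card_filter_not (fun u => d u = 1)
    omega
  have hU1big : s < U1.card := by
    have := hbig
    have h : s * (1 + Δ) = s + s * Δ := by ring
    omega
  -- choose the unique neighbor function
  set f : V → V := fun u =>
    if h : (V'.filter (fun v => G.Adj u v)).Nonempty then h.choose else u with hf
  have hfmem : ∀ u ∈ U, f u ∈ V'.filter (fun v => G.Adj u v) := by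
    intro u hu
    have hne : (V'.filter (fun v => G.Adj u v)).Nonempty :=
      Finset.card_pos.mp (hdpos u hu)
    simp only [hf, dif_pos hne]
    exact hne.choose_spec
  have hfuniq : ∀ u ∈ U1, ∀ v ∈ V', G.Adj u v → v = f u := by
    intro u hu v hv hadj
    obtain ⟨huU, hd1⟩ := Finset.mem_filter.mp hu
    have h1 : v ∈ V'.filter (fun v => G.Adj u v) := Finset.mem_filter.mpr ⟨hv, hadj⟩
    have h2 := hfmem u huU
    exact Finset.card_le_one.mp (le_of_eq hd1) v h1 (f u) h2
  obtain ⟨α, hα, β, hβ, hne, hfab⟩ :=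
    Finset.exists_ne_map_eq_of_card_lt_of_maps_to (by omega : V'.card < U1.card)
      (fun u hu => (Finset.mem_filter.mp (hfmem u (Finset.mem_filter.mp hu).1)).1)
  obtain ⟨hαU, _⟩ := Finset.mem_filter.mp hα
  obtain ⟨hβU, _⟩ := Finset.mem_filter.mp hβ
  set γ := f α with hγ
  have hγV' : γ ∈ V' := (Finset.mem_filter.mp (hfmem α hαU)).1
  have hαγ : G.Adj α γ := (Finset.mem_filter.mp (hfmem α hαU)).2
  have hβγ : G.Adj β γ := hfab ▸ (Finset.mem_filter.mp (hfmem β hβU)).2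
  refine ⟨α, hαU, β, hβU, hne, ?_, γ, hγV', ?_, ?_⟩
  · intro hadj
    exact htf {α, β, γ} (SimpleGraph.is3Clique_triple_iff.mpr ⟨hadj, hαγ, hβγ⟩)
  · intro v hv
    exact ⟨fun h => hfuniq α hα v hv h, fun h => h ▸ hαγ⟩
  · intro v hv
    refine ⟨fun h => ?_, fun h => h ▸ hβγ⟩
    rw [hfuniq β hβ v hv h, hfab]
end

section
/- Let G be a simple graph with no 4-cycle and maximum degree Δ. Suppose G has an independent set V' of size s, and there exists U ⊆ V(G) \ V' with |U| > s(2+Δ)/2 such that every vertex of U has at least one neighbor in V'. Then U contains two nonadjacent vertices α and β that each have exactly one neighbor in V', and that neighbor is the same vertex γ ∈ V'. -/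
open Finset

/-- `G` contains no cycle of length `4`. -/
def C4Free {V : Type*} (G : SimpleGraph V) : Prop :=
  ∀ a b c d : V, a ≠ b → b ≠ c → c ≠ d → d ≠ a → a ≠ c → b ≠ d →
    ¬ (G.Adj a b ∧ G.Adj b c ∧ G.Adj c d ∧ G.Adj d a)

theorem stmt4 {V : Type*} [Fintype V] [DecidableEq V] (G : SimpleGraph V)
    [DecidableRel G.Adj]
    (hC4 : C4Free G)
    (V' U : Finset V) (s : ℕ) (hs : V'.card = s)
    (hindep : ∀ a ∈ V', ∀ b ∈ V', a ≠ b → ¬ G.Adj a b)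
    (hUV' : Disjoint U V')
    (hnb : ∀ u ∈ U, ∃ v ∈ V', G.Adj u v)
    (hbig : s * (2 + G.maxDegree) < 2 * U.card) :
    ∃ α ∈ U, ∃ β ∈ U, α ≠ β ∧ ¬ G.Adj α β ∧
      ∃ γ ∈ V', (∀ v ∈ V', (G.Adj α v ↔ v = γ)) ∧ (∀ v ∈ V', (G.Adj β v ↔ v = γ)) := by
  classical
  set d : V → ℕ := fun u => (V'.filter (fun v => G.Adj u v)).card with hd
  have hd1 : ∀ u ∈ U, 1 ≤ d u := by
    intro u hu
    obtain ⟨v, hv, hadj⟩ := hnb u hu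
    have : v ∈ V'.filter (fun v => G.Adj u v) := by simp [hv, hadj]
    exact Finset.card_pos.2 ⟨v, this⟩
  set U1 : Finset V := U.filter (fun u => d u = 1) with hU1
  -- upper bound on total edge count
  have hsum : ∑ u ∈ U, d u ≤ s * G.maxDegree := by
    have h1 : ∑ u ∈ U, d u = ∑ v ∈ V', (U.filter (fun u => G.Adj u v)).card := by
      simp only [hd, Finset.card_filter]
      rw [Finset.sum_comm]
    rw [h1, ← hs]
    calc ∑ v ∈ V', (U.filter (fun u => G.Adj u v)).card
        ≤ ∑ _v ∈ V', G.maxDegree := by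
          apply Finset.sum_le_sum
          intro v _
          have hsub : U.filter (fun u => G.Adj u v) ⊆ G.neighborFinset v := by
            intro u hu
            rw [SimpleGraph.mem_neighborFinset]
            exact ((Finset.mem_filter.1 hu).2).symm
          exact le_trans (Finset.card_le_card hsub) (G.degree_le_maxDegree v)
      _ = V'.card * G.maxDegree := by rw [Finset.sum_const, smul_eq_mul]
  -- lower bound
  have hlow : 2 * U.card ≤ (∑ u ∈ U, d u) + U1.card := by
    have : ∑ u ∈ U, (2 : ℕ) ≤ ∑ u ∈ U, (d u + if d u = 1 then 1 else 0) := by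
      apply Finset.sum_le_sum
      intro u hu
      by_cases h : d u = 1
      · simp [h]
      · have := hd1 u hu
        have : 2 ≤ d u := by omega
        simp [h]; omega
    rw [Finset.sum_const, smul_eq_mul] at this
    have hsplit : ∑ u ∈ U, (d u + if d u = 1 then 1 else 0)
        = (∑ u ∈ U, d u) + U1.card := by
      rw [Finset.sum_add_distrib, hU1, Finset.card_filter]
    omega
  have hU1big : s * 2 < U1.card := by nlinarith
  -- pigeonhole: some γ ∈ V' has > 2 neighbors in U1
  have hfib : ∑ γ ∈ V', (U1.filter (fun u => G.Adj u γ)).card = U1.card := by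
    have : ∑ γ ∈ V', (U1.filter (fun u => G.Adj u γ)).card = ∑ u ∈ U1, d u := by
      simp only [Finset.card_filter, hd]
      rw [Finset.sum_comm]
    rw [this]
    have : ∀ u ∈ U1, d u = 1 := fun u hu => (Finset.mem_filter.1 hu).2
    calc ∑ u ∈ U1, d u = ∑ _u ∈ U1, 1 := Finset.sum_congr rfl this
      _ = U1.card := by simp
  have : ∑ _γ ∈ V', (2 : ℕ) < ∑ γ ∈ V', (U1.filter (fun u => G.Adj u γ)).card := by
    rw [hfib, Finset.sum_const, smul_eq_mul, hs]
    omega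
  obtain ⟨γ, hγV', hγ⟩ := Finset.exists_lt_of_sum_lt this
  set T : Finset V := U1.filter (fun u => G.Adj u γ) with hT
  obtain ⟨a, b, c, ha, hbm, hcm, hab, hac, hbc⟩ := Finset.two_lt_card_iff.1 hγ
  -- facts about members of T
  have hmem : ∀ u ∈ T, u ∈ U ∧ G.Adj u γ ∧ ∀ v ∈ V', (G.Adj u v ↔ v = γ) := by
    intro u hu
    have hu1 : u ∈ U1 := (Finset.mem_filter.1 hu).1
    have huγ : G.Adj u γ := (Finset.mem_filter.1 hu).2
    have huU : u ∈ U := (Finset.mem_filter.1 hu1).1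
    have hdu : d u = 1 := (Finset.mem_filter.1 hu1).2
    refine ⟨huU, huγ, ?_⟩
    intro v hv
    constructor
    · intro hadj
      have hvmem : v ∈ V'.filter (fun w => G.Adj u w) := Finset.mem_filter.2 ⟨hv, hadj⟩
      have hγmem : γ ∈ V'.filter (fun w => G.Adj u w) := Finset.mem_filter.2 ⟨hγV', huγ⟩
      exact Finset.card_le_one.1 (le_of_eq hdu) v hvmem γ hγmem
    · rintro rfl; exact huγ
  have hγnotU : ∀ u ∈ T, u ≠ γ := by
    intro u hu h
    exact (Finset.disjoint_left.1 hUV') ((hmem u hu).1) (h ▸ hγV')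
  -- among a b c, two are nonadjacent
  have key : ∀ x ∈ T, ∀ y ∈ T, ∀ z ∈ T, x ≠ y → x ≠ z → y ≠ z →
      ¬ (G.Adj x y ∧ G.Adj x z) := by
    intro x hx y hy z hz hxy hxz hyz ⟨h1, h2⟩
    exact hC4 y x z γ hxy.symm hxz (hγnotU z hz) ((hγnotU y hy).symm) hyz
      (hγnotU x hx)
      ⟨h1.symm, h2, (hmem z hz).2.1, ((hmem y hy).2.1).symm⟩
  by_cases h1 : G.Adj a b
  · by_cases h2 : G.Adj a c
    · exact absurd ⟨h1, h2⟩ (key a ha b hbm c hcm hab hac hbc)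
    · exact ⟨a, (hmem a ha).1, c, (hmem c hcm).1, hac, h2, γ, hγV',
        (hmem a ha).2.2, (hmem c hcm).2.2⟩
  · exact ⟨a, (hmem a ha).1, b, (hmem b hbm).1, hab, h1, γ, hγV',
      (hmem a ha).2.2, (hmem b hbm).2.2⟩
end

section
/- Let G be a simple graph of order m·t + r where 1 ≤ r ≤ m−1 and t ≥ 1, and suppose the disjoint union of G with the complete graph K_{m−r} is equitably m-colorable. Then G is equitably m-colorable. -/
open Finset

lemma bal_aux {m t : ℕ} (hm : 0 < m) (f : Fin m → ℕ)
    (hsum : ∑ i, f i = m * (t + 1)) (hle : ∀ i j, f i ≤ f j + 1) :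
    ∀ i, f i = t + 1 := by
  intro i
  by_contra hne
  have hne' : f i ≥ t + 2 ∨ f i ≤ t := by omega
  have hcardm : ((Finset.univ : Finset (Fin m))).card = m := by simp
  rcases hne' with h | h
  · have hall : ∀ j, t + 1 ≤ f j := fun j => by have := hle i j; omega
    have : ∑ _j : Fin m, (t + 1) < ∑ j, f j := by
      apply Finset.sum_lt_sum (fun j _ => hall j)
      exact ⟨i, Finset.mem_univ i, by omega⟩
    simp [Finset.sum_const, hcardm, hsum, mul_comm] at this
  · have hall : ∀ j, f j ≤ t + 1 := fun j => by have := hle j i; omega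
    have : ∑ j, f j < ∑ _j : Fin m, (t + 1) := by
      apply Finset.sum_lt_sum (fun j _ => hall j)
      exact ⟨i, Finset.mem_univ i, by omega⟩
    simp [Finset.sum_const, hcardm, hsum, mul_comm] at this

theorem stmt7 {V : Type*} [Fintype V] (G : SimpleGraph V)
    (m t r : ℕ) (ht : 1 ≤ t) (hr1 : 1 ≤ r) (hr2 : r ≤ m - 1)
    (hcard : Fintype.card V = m * t + r)
    (hunion : EquitablyColorable (G.sum (⊤ : SimpleGraph (Fin (m - r)))) m) :
    EquitablyColorable G m := by
  obtain ⟨C, hprop, heq⟩ := hunion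
  have hm2 : 2 ≤ m := by omega
  have hm : 0 < m := by omega
  -- total class sizes
  set N : Fin m → ℕ := fun i => (Finset.univ.filter fun x => C x = i).card with hN
  have hsum : ∑ i, N i = m * (t + 1) := by
    have : Fintype.card (V ⊕ Fin (m - r)) = ∑ i, N i := by
      rw [← Finset.card_univ]
      exact Finset.card_eq_sum_card_fiberwise (fun x _ => Finset.mem_univ (C x))
    rw [← this]
    simp [Fintype.card_sum, hcard]
    have : m - r + r = m := by omega
    ring_nf
    omega
  have hNval : ∀ i, N i = t + 1 := bal_aux hm N hsum heq
  -- inr part has at most one vertex per class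
  have hinr : ∀ i : Fin m, (Finset.univ.filter fun w : Fin (m - r) => C (Sum.inr w) = i).card ≤ 1 := by
    intro i
    apply Finset.card_le_one.mpr
    intro a ha b hb
    simp only [Finset.mem_filter] at ha hb
    by_contra hab
    exact hprop _ _ (by simp [SimpleGraph.sum, hab] : (G.sum (⊤ : SimpleGraph (Fin (m - r)))).Adj (Sum.inr a) (Sum.inr b)) (ha.2.trans hb.2.symm)
  -- split N into inl and inr parts
  set f : Fin m → ℕ := fun i => (Finset.univ.filter fun v : V => C (Sum.inl v) = i).card with hf
  have hsplit : ∀ i, N i = f i + (Finset.univ.filter fun w : Fin (m - r) => C (Sum.inr w) = i).card := by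
    intro i
    simp only [hN, hf]
    rw [Finset.card_filter, Finset.card_filter, Finset.card_filter]
    rw [Fintype.sum_sum_type]
  refine ⟨fun v => C (Sum.inl v), fun a b hab => hprop _ _ (by simpa using hab), fun i j => ?_⟩
  have h1 := hsplit i
  have h2 := hsplit j
  have h3 := hinr i
  have h4 := hinr j
  have h5 := hNval i
  have h6 := hNval j
  show f i ≤ f j + 1
  omega
end

section
/- For an n-vertex graph G, let G' be obtained from G by adding 2n isolated vertices. Then G is (properly) 3-colorable if and only if G' is equitably 3-colorable. -/
open Finset

lemma count_lt' (m k : ℕ) : (univ.filter fun j : Fin m => (j:ℕ) < k).card = min k m := by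
  have : (univ.filter fun j : Fin m => (j:ℕ) < k) = ((range (min k m)).attachFin
      (fun x hx => lt_of_lt_of_le (mem_range.mp hx) (min_le_right _ _))) := by
    ext j
    simp [lt_min_iff, j.2]
  rw [this, Finset.card_attachFin, Finset.card_range]

lemma card_filter_sum {α β : Type*} [Fintype α] [Fintype β] (p : α ⊕ β → Prop)
    [DecidablePred p] :
    ((univ : Finset (α ⊕ β)).filter p).card =
      (univ.filter fun a => p (Sum.inl a)).card + (univ.filter fun b => p (Sum.inr b)).card := by
  rw [← Finset.univ_disjSum_univ]
  have : ((univ.disjSum univ : Finset (α ⊕ β)).filter p)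
      = (univ.filter fun a => p (Sum.inl a)).disjSum (univ.filter fun b => p (Sum.inr b)) := by
    ext x; cases x <;> simp
  rw [this, Finset.card_disjSum]

set_option maxHeartbeats 1000000 in
theorem stmt14 {V : Type*} [Fintype V] (G : SimpleGraph V) (n : ℕ)
    (hn : Fintype.card V = n) :
    G.Colorable 3 ↔
      EquitablyColorable (G.sum (⊥ : SimpleGraph (Fin (2 * n)))) 3 := by
  constructor
  · rintro ⟨C⟩
    set a : Fin 3 → ℕ := fun i => (univ.filter fun v => C v = i).card with ha
    have hsum : a 0 + a 1 + a 2 = n := by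
      have := Finset.card_eq_sum_card_fiberwise (f := C) (s := univ) (t := univ)
        (fun v _ => mem_univ _)
      rw [Finset.card_univ, hn, Fin.sum_univ_three] at this
      simp only [ha]
      omega
    have hle : ∀ i, a i ≤ n := by
      intro i
      calc a i ≤ (univ : Finset V).card := Finset.card_filter_le _ _
        _ = n := by rw [Finset.card_univ, hn]
    set b : Fin 3 → ℕ := fun i => n - a i with hb
    have hb0 : b 0 ≤ 2 * n := le_trans (Nat.sub_le _ _) (by omega)
    have hb01 : b 0 + b 1 ≤ 2 * n := by
      have := hle 0; have := hle 1
      simp only [hb]; omega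
    set f : Fin (2 * n) → Fin 3 := fun j =>
      if (j : ℕ) < b 0 then 0 else if (j : ℕ) < b 0 + b 1 then 1 else 2 with hf
    refine ⟨Sum.elim C f, ?_, ?_⟩
    · rintro (x | x) (y | y) hadj <;> simp [SimpleGraph.sum] at hadj ⊢
      exact C.valid hadj
    · have c0 : (univ.filter fun j : Fin (2*n) => f j = 0).card = b 0 := by
        have : (univ.filter fun j : Fin (2*n) => f j = 0)
            = univ.filter fun j : Fin (2*n) => (j : ℕ) < b 0 := by
          ext j; simp only [mem_filter, mem_univ, true_and, hf]
          split_ifs <;> simp_all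
        rw [this, count_lt', min_eq_left hb0]
      have c1 : (univ.filter fun j : Fin (2*n) => f j = 1).card = b 1 := by
        have heq : (univ.filter fun j : Fin (2*n) => f j = 1)
            = (univ.filter fun j : Fin (2*n) => (j : ℕ) < b 0 + b 1) \
              (univ.filter fun j : Fin (2*n) => (j : ℕ) < b 0) := by
          ext j
          simp only [mem_filter, mem_univ, true_and, mem_sdiff, hf]
          split_ifs <;> simp_all <;> omega
        rw [heq, Finset.card_sdiff_of_subset (by
          intro j hj
          simp only [mem_filter, mem_univ, true_and] at hj ⊢
          omega)]
        rw [count_lt', count_lt', min_eq_left hb01, min_eq_left hb0]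
        omega
      have c2 : (univ.filter fun j : Fin (2*n) => f j = 2).card = b 2 := by
        have heq : (univ.filter fun j : Fin (2*n) => f j = 2)
            = univ \ (univ.filter fun j : Fin (2*n) => (j : ℕ) < b 0 + b 1) := by
          ext j
          simp only [mem_filter, mem_univ, true_and, mem_sdiff, hf]
          split_ifs <;> simp_all <;> omega
        rw [heq, Finset.card_sdiff_of_subset (Finset.subset_univ _), count_lt', min_eq_left hb01,
          Finset.card_univ, Fintype.card_fin]
        simp only [hb]
        omega
      have key : ∀ i : Fin 3, (univ.filter fun v => Sum.elim C f v = i).card = n := by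
        intro i
        fin_cases i
        · show (univ.filter fun v => Sum.elim C f v = 0).card = n
          rw [card_filter_sum]
          simp only [Sum.elim_inl, Sum.elim_inr]
          show (univ.filter fun a => C a = 0).card + (univ.filter fun b => f b = 0).card = n
          rw [c0]; have := hle 0; simp only [ha, hb] at *; omega
        · show (univ.filter fun v => Sum.elim C f v = 1).card = n
          rw [card_filter_sum]
          simp only [Sum.elim_inl, Sum.elim_inr]
          show (univ.filter fun a => C a = 1).card + (univ.filter fun b => f b = 1).card = n
          rw [c1]; have := hle 1; simp only [ha, hb] at *; omega
        · show (univ.filter fun v => Sum.elim C f v = 2).card = n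
          rw [card_filter_sum]
          simp only [Sum.elim_inl, Sum.elim_inr]
          show (univ.filter fun a => C a = 2).card + (univ.filter fun b => f b = 2).card = n
          rw [c2]; have := hle 2; simp only [ha, hb] at *; omega
      intro i j
      rw [key i, key j]
      omega
  · rintro ⟨C, hC, -⟩
    exact ⟨⟨fun v => C (Sum.inl v), fun hadj => hC _ _ (by simpa [SimpleGraph.sum] using hadj)⟩⟩
end

section
/- Every forest with maximum degree Δ has an equitable k-coloring for every k ≥ 1 + ⌈Δ/2⌉. -/
open Finset SimpleGraph

section Helpers

variable {V : Type*} [Fintype V] [DecidableEq V] (G : SimpleGraph V) [DecidableRel G.Adj]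

/-- Any finset can be partitioned into fibers of prescribed sizes. -/
lemma exists_fiber_sizes : ∀ (k : ℕ), 0 < k → ∀ (A : Finset V) (f : Fin k → ℕ),
    (∑ i, f i) = A.card →
    ∃ C : V → Fin k, ∀ i, (A.filter (fun v => C v = i)).card = f i := by
  intro k
  induction k with
  | zero => intro h; omega
  | succ k ih =>
    intro _ A f hsum
    rcases Nat.eq_zero_or_pos k with hk0 | hkpos
    · subst hk0
      refine ⟨fun _ => 0, fun i => ?_⟩
      have hi : i = 0 := Fin.fin_one_eq_zero i
      subst hi
      rw [Fin.sum_univ_one] at hsum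
      simpa using hsum.symm
    · -- peel off the last color
      have hle : f (Fin.last k) ≤ A.card := by
        rw [← hsum]
        exact Finset.single_le_sum (fun i _ => Nat.zero_le _) (mem_univ _)
      obtain ⟨B, hBA, hBcard⟩ := Finset.exists_subset_card_eq hle
      have hsum' : (∑ i, f (Fin.castSucc i)) = (A \ B).card := by
        rw [Finset.card_sdiff_of_subset hBA, hBcard]
        rw [Fin.sum_univ_castSucc] at hsum
        omega
      obtain ⟨C', hC'⟩ := ih hkpos (A \ B) (fun i => f (Fin.castSucc i)) hsum'
      refine ⟨fun v => if v ∈ B then Fin.last k else Fin.castSucc (C' v), fun i => ?_⟩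
      induction i using Fin.lastCases with
      | last =>
        have : A.filter (fun v => (if v ∈ B then Fin.last k else Fin.castSucc (C' v)) = Fin.last k) = B := by
          ext v
          simp only [mem_filter]
          constructor
          · rintro ⟨hvA, hv⟩
            by_contra hvB
            rw [if_neg hvB] at hv
            exact absurd hv (Fin.castSucc_lt_last (C' v)).ne
          · intro hvB
            exact ⟨hBA hvB, by rw [if_pos hvB]⟩
        rw [this, hBcard]
      | cast i =>
        have : A.filter (fun v => (if v ∈ B then Fin.last k else Fin.castSucc (C' v)) = Fin.castSucc i)
            = (A \ B).filter (fun v => C' v = i) := by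
          ext v
          simp only [mem_filter, mem_sdiff]
          constructor
          · rintro ⟨hvA, hv⟩
            by_cases hvB : v ∈ B
            · rw [if_pos hvB] at hv
              exact absurd hv.symm (Fin.castSucc_lt_last i).ne
            · rw [if_neg hvB] at hv
              exact ⟨⟨hvA, hvB⟩, Fin.castSucc_injective _ hv⟩
          · rintro ⟨⟨hvA, hvB⟩, hv⟩
            exact ⟨hvA, by rw [if_neg hvB, hv]⟩
        rw [this, hC']

/-- The slot-selection lemma: from a near-balanced size vector we can remove `T`
units, keeping it near-balanced, taking at most 2 from each coordinate, with many
coordinates losing exactly 1. -/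
lemma slot_lemma {k T : ℕ} (f : Fin k → ℕ) (hspread : ∀ i j, f i ≤ f j + 1)
    (h1 : T ≤ ∑ i, f i) (h2 : T ≤ 2 * k) :
    ∃ s : Fin k → ℕ, (∀ i, s i ≤ f i) ∧ (∑ i, s i) = T ∧
      (∀ i j, f i - s i ≤ f j - s j + 1) ∧
      min T (2 * k - T) ≤ (univ.filter (fun i => s i = 1)).card := by
  rcases Nat.eq_zero_or_pos k with hk0 | hkpos
  · subst hk0
    have : T = 0 := by simpa using h1
    subst this
    exact ⟨fun i => 0, fun i => Nat.zero_le _, by simp, fun i j => by simpa using hspread i j, by simp⟩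
  -- minimum value m
  obtain ⟨i0, -, hi0⟩ := Finset.exists_min_image univ f ⟨⟨0, hkpos⟩, mem_univ _⟩
  set m := f i0 with hm
  set A : Finset (Fin k) := univ.filter (fun i => m < f i) with hA
  have hfA : ∀ i ∈ A, f i = m + 1 := by
    intro i hi
    have h1 := (mem_filter.mp hi).2
    have h2 := hspread i i0
    omega
  have hfnA : ∀ i ∉ A, f i = m := by
    intro i hi
    have h1 : ¬ m < f i := fun h => hi (mem_filter.mpr ⟨mem_univ _, h⟩)
    have h2 := hi0 i (mem_univ _)
    omega
  have hsumf : (∑ i, f i) = k * m + A.card := by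
    have : ∀ i ∈ (univ : Finset (Fin k)), f i = m + (if i ∈ A then 1 else 0) := by
      intro i _
      by_cases hi : i ∈ A
      · rw [if_pos hi, hfA i hi]
      · rw [if_neg hi, hfnA i hi]; omega
    rw [Finset.sum_congr rfl this, Finset.sum_add_distrib, Finset.sum_const, Finset.card_univ,
      Fintype.card_fin, smul_eq_mul, Finset.sum_ite_mem, Finset.univ_inter,
      Finset.sum_const, smul_eq_mul, mul_one]
  have hAcard : A.card ≤ k := by
    simpa using Finset.card_le_card (Finset.subset_univ A)
  rcases le_or_gt T k with hTk | hTk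
  · -- s = indicator of Q, |Q| = T
    have hQ : ∃ Q : Finset (Fin k), Q.card = T ∧ (∀ i ∈ Q, 1 ≤ f i) ∧
        (∀ j ∈ Q, ∀ i, i ∉ Q → f i ≤ f j) := by
      rcases le_or_gt T A.card with hTa | hTa
      · obtain ⟨Q, hQA, hQc⟩ := Finset.exists_subset_card_eq hTa
        refine ⟨Q, hQc, fun i hi => by rw [hfA i (hQA hi)]; omega, fun j hj i hi => ?_⟩
        have h3 := hspread i i0
        have h4 := hfA j (hQA hj)
        omega
      · have hm1 : 1 ≤ m := by
          by_contra hm0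
          have : m = 0 := by omega
          rw [this] at hsumf
          omega
        obtain ⟨Q, hAQ, -, hQc⟩ := Finset.exists_subsuperset_card_eq (Finset.subset_univ A)
          (le_of_lt hTa) (by simpa using hTk)
        refine ⟨Q, hQc, fun i hi => ?_, fun j hj i hi => ?_⟩
        · have := hi0 i (mem_univ _); omega
        · have hiA : i ∉ A := fun h => hi (hAQ h)
          have := hfnA i hiA
          have := hi0 j (mem_univ _)
          omega
    obtain ⟨Q, hQc, hQ1, hQmax⟩ := hQ
    refine ⟨fun i => if i ∈ Q then 1 else 0, ?_, ?_, ?_, ?_⟩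
    · intro i
      show (if i ∈ Q then 1 else 0) ≤ f i
      by_cases hi : i ∈ Q
      · rw [if_pos hi]; exact hQ1 i hi
      · rw [if_neg hi]; omega
    · rw [Finset.sum_ite_mem, Finset.univ_inter, Finset.sum_const, smul_eq_mul, mul_one, hQc]
    · intro i j
      by_cases hi : i ∈ Q <;> by_cases hj : j ∈ Q <;>
        simp only [if_pos, if_neg, hi, hj, if_true, if_false]
      · have := hspread i j; omega
      · have := hspread i j; omega
      · have := hQmax j hj i hi; have := hQ1 j hj; omega
      · have := hspread i j; omega
    · have : (univ.filter (fun i => (if i ∈ Q then 1 else 0) = 1)) = Q := by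
        ext i; by_cases hi : i ∈ Q <;> simp [hi]
      rw [this, hQc]
      exact min_le_left _ _
  · -- T > k : s = 1 + indicator of Q₂, |Q₂| = T - k
    have hm1 : 1 ≤ m := by
      by_contra hm0
      have : m = 0 := by omega
      rw [this] at hsumf
      omega
    have hQ : ∃ Q : Finset (Fin k), Q.card = T - k ∧ (∀ i ∈ Q, 2 ≤ f i) ∧
        (∀ j ∈ Q, ∀ i, i ∉ Q → f i ≤ f j) := by
      rcases le_or_gt (T - k) A.card with hTa | hTa
      · obtain ⟨Q, hQA, hQc⟩ := Finset.exists_subset_card_eq hTa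
        refine ⟨Q, hQc, fun i hi => by rw [hfA i (hQA hi)]; omega, fun j hj i hi => ?_⟩
        have h3 := hspread i i0
        have h4 := hfA j (hQA hj)
        omega
      · have hm2 : 2 ≤ m := by
          by_contra hm0
          have : m = 1 := by omega
          rw [this, mul_one] at hsumf
          omega
        obtain ⟨Q, hAQ, -, hQc⟩ := Finset.exists_subsuperset_card_eq (Finset.subset_univ A)
          (le_of_lt hTa) (by simpa using (by omega : T - k ≤ k))
        refine ⟨Q, hQc, fun i hi => ?_, fun j hj i hi => ?_⟩
        · have := hi0 i (mem_univ _); omega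
        · have hiA : i ∉ A := fun h => hi (hAQ h)
          have := hfnA i hiA
          have := hi0 j (mem_univ _)
          omega
    obtain ⟨Q, hQc, hQ2, hQmax⟩ := hQ
    refine ⟨fun i => if i ∈ Q then 2 else 1, ?_, ?_, ?_, ?_⟩
    · intro i
      show (if i ∈ Q then 2 else 1) ≤ f i
      by_cases hi : i ∈ Q
      · rw [if_pos hi]; exact hQ2 i hi
      · rw [if_neg hi]; have := hi0 i (mem_univ _); omega
    · have : ∀ i ∈ (univ : Finset (Fin k)), (if i ∈ Q then 2 else 1) = 1 + (if i ∈ Q then 1 else 0) := by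
        intro i _; by_cases hi : i ∈ Q <;> simp [hi]
      rw [Finset.sum_congr rfl this, Finset.sum_add_distrib, Finset.sum_const, Finset.card_univ,
        Fintype.card_fin, smul_eq_mul, mul_one, Finset.sum_ite_mem, Finset.univ_inter,
        Finset.sum_const, smul_eq_mul, mul_one, hQc]
      omega
    · intro i j
      by_cases hi : i ∈ Q <;> by_cases hj : j ∈ Q <;>
        simp only [if_pos, if_neg, hi, hj, if_true, if_false]
      · have := hspread i j; omega
      · have := hspread i j; omega
      · have := hQmax j hj i hi; have := hQ2 j hj; have := hi0 i (mem_univ _); omega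
      · have := hspread i j; omega
    · have : (univ.filter (fun i => (if i ∈ Q then 2 else 1) = 1)) = Qᶜ := by
        ext i; by_cases hi : i ∈ Q <;> simp [hi]
      rw [this, Finset.card_compl, Fintype.card_fin, hQc]
      omega

/-- In a forest, any finite set has a vertex with at most one neighbour inside the set. -/
lemma exists_low_deg (hG : G.IsAcyclic) (A : Finset V) (hA : A.Nonempty) :
    ∃ v ∈ A, (A.filter (fun x => G.Adj v x)).card ≤ 1 := by
  classical
  by_contra hcon
  push_neg at hcon
  have hdeg : ∀ v ∈ A, 2 ≤ (A.filter (fun x => G.Adj v x)).card := by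
    intro v hv
    have := hcon v hv
    omega
  set P : ℕ → Prop := fun ℓ => ∃ (v w : V) (p : G.Walk v w), p.IsPath ∧
    (∀ x ∈ p.support, x ∈ A) ∧ p.length = ℓ with hP
  obtain ⟨v0, hv0⟩ := hA
  have hP0 : P 0 := ⟨v0, v0, Walk.nil, by simp, by simpa using hv0, rfl⟩
  have hbdd : ∀ ℓ, P ℓ → ℓ ≤ Fintype.card V := by
    rintro ℓ ⟨v, w, p, hp, -, rfl⟩
    exact le_of_lt hp.length_lt
  set L := Nat.findGreatest P (Fintype.card V) with hL
  have hPL : P L := Nat.findGreatest_spec (Nat.zero_le _) hP0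
  have hmax : ∀ m, P m → m ≤ L := fun m hm => Nat.le_findGreatest (hbdd m hm) hm
  obtain ⟨v, w, p, hp, hsupp, hlen⟩ := hPL
  have hvA : v ∈ A := hsupp v p.start_mem_support
  -- every A-neighbour of v lies on p
  have hnb : ∀ y ∈ A.filter (fun x => G.Adj v x), y ∈ p.support := by
    intro y hy
    rw [mem_filter] at hy
    by_contra hys
    have hq : (Walk.cons (hy.2.symm) p).IsPath := by
      rw [Walk.cons_isPath_iff]
      exact ⟨hp, hys⟩
    have : P (L + 1) := ⟨y, w, Walk.cons hy.2.symm p, hq, ?_, by simp [hlen]⟩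
    · have := hmax _ this; omega
    · intro x hx
      rw [Walk.support_cons, List.mem_cons] at hx
      rcases hx with rfl | hx
      · exact hy.1
      · exact hsupp x hx
  obtain ⟨y, hy, hyne⟩ := Finset.exists_mem_ne (s := A.filter (fun x => G.Adj v x))
    (by have := hdeg v hvA; omega) (p.getVert 1)
  have hyA := (mem_filter.mp hy).1
  have hadj : G.Adj v y := (mem_filter.mp hy).2
  have hysupp : y ∈ p.support := hnb y hy
  set p1 := p.takeUntil y hysupp with hp1def
  have hp1 : p1.IsPath := hp.takeUntil hysupp
  have hp2 : (Walk.cons hadj Walk.nil : G.Walk v y).IsPath := by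
    rw [Walk.cons_isPath_iff]
    simpa using hadj.ne
  have heq : p1 = Walk.cons hadj Walk.nil :=
    Subtype.ext_iff.mp (hG.path_unique ⟨p1, hp1⟩ ⟨_, hp2⟩)
  have hlen1 : p1.length = 1 := by rw [heq]; simp
  have : p.getVert 1 = y := by
    conv_lhs => rw [← p.take_spec hysupp]
    rw [Walk.getVert_append]
    rw [hlen1]
    simp
  exact hyne (this ▸ rfl)

/-- In a forest, any finite set containing an edge has a "bottom star": a vertex `u`
with a nonempty set of in-`A` neighbours that are leaves (their only `A`-neighbour is `u`),
and at most one other `A`-neighbour. -/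
lemma star_extract (hG : G.IsAcyclic) :
    ∀ (n : ℕ) (A : Finset V), A.card ≤ n → (∃ a ∈ A, ∃ b ∈ A, G.Adj a b) →
    ∃ u ∈ A, ∃ Cs : Finset V, Cs ⊆ A ∧ Cs.Nonempty ∧ u ∉ Cs ∧
      (∀ c ∈ Cs, G.Adj u c ∧ A.filter (fun x => G.Adj c x) = {u}) ∧
      ((A.filter (fun x => G.Adj u x)) \ Cs).card ≤ 1 := by
  intro n
  induction n with
  | zero =>
    rintro A hcard ⟨a, ha, -⟩
    rw [Nat.le_zero, Finset.card_eq_zero] at hcard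
    subst hcard
    exact absurd ha (notMem_empty a)
  | succ n ih =>
    rintro A hcard ⟨a, ha, b, hb, hab⟩
    obtain ⟨v, hv, hvcard⟩ := exists_low_deg G hG A ⟨a, ha⟩
    interval_cases hc : (A.filter (fun x => G.Adj v x)).card
    · -- v is isolated in A
      rw [Finset.card_eq_zero] at hc
      have hva : v ≠ a := by
        rintro rfl
        have : b ∈ A.filter (fun x => G.Adj v x) := mem_filter.mpr ⟨hb, hab⟩
        simp [hc] at this
      have hvb : v ≠ b := by
        rintro rfl
        have : a ∈ A.filter (fun x => G.Adj v x) := mem_filter.mpr ⟨ha, hab.symm⟩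
        simp [hc] at this
      set A' := A.erase v with hA'
      have hA'card : A'.card ≤ n := by
        rw [hA', Finset.card_erase_of_mem hv]
        have : 1 ≤ A.card := Finset.card_pos.mpr ⟨v, hv⟩
        omega
      have htrans : ∀ x ∈ A', A.filter (fun y => G.Adj x y) = A'.filter (fun y => G.Adj x y) := by
        intro x hx
        rw [hA', Finset.filter_erase, Finset.erase_eq_of_notMem]
        intro hmem
        rw [mem_filter] at hmem
        have : x ∈ A.filter (fun y => G.Adj v y) :=
          mem_filter.mpr ⟨Finset.mem_of_mem_erase hx, hmem.2.symm⟩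
        simp [hc] at this
      obtain ⟨u, huA', Cs, hCsA', hCsne, huCs, hchild, hpar⟩ := ih A' hA'card
        ⟨a, Finset.mem_erase.mpr ⟨hva.symm, ha⟩, b, Finset.mem_erase.mpr ⟨hvb.symm, hb⟩, hab⟩
      refine ⟨u, Finset.mem_of_mem_erase huA', Cs,
        hCsA'.trans (Finset.erase_subset _ _), hCsne, huCs, ?_, ?_⟩
      · intro c hc'
        refine ⟨(hchild c hc').1, ?_⟩
        rw [htrans c (hCsA' hc')]
        exact (hchild c hc').2
      · rw [htrans u huA']
        exact hpar
    · -- v is a leaf in A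
      rw [Finset.card_eq_one] at hc
      obtain ⟨w, hNAv⟩ := hc
      have hwmem : w ∈ A.filter (fun x => G.Adj v x) := hNAv ▸ Finset.mem_singleton_self w
      rw [mem_filter] at hwmem
      obtain ⟨hwA, hadj⟩ := hwmem
      by_cases hw : A.filter (fun x => G.Adj w x) = {v}
      · -- isolated edge v - w
        refine ⟨w, hwA, {v}, Finset.singleton_subset_iff.mpr hv, ⟨v, mem_singleton_self v⟩,
          ?_, ?_, ?_⟩
        · simp [hadj.ne']
        · intro c hc'
          rw [Finset.mem_singleton] at hc'
          subst hc'
          exact ⟨hadj.symm, hNAv⟩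
        · rw [hw]
          simp
      · -- w has another neighbour y ≠ v in A
        have hvNAw : v ∈ A.filter (fun x => G.Adj w x) := mem_filter.mpr ⟨hv, hadj.symm⟩
        have : ∃ y ∈ A.filter (fun x => G.Adj w x), y ≠ v := by
          by_contra hcon
          push_neg at hcon
          apply hw
          apply Finset.Subset.antisymm
          · intro z hz
            rw [Finset.mem_singleton]
            exact hcon z hz
          · exact Finset.singleton_subset_iff.mpr hvNAw
        obtain ⟨y, hyNAw, hyv⟩ := this
        rw [mem_filter] at hyNAw
        set A' := A.erase v with hA'
        have hA'card : A'.card ≤ n := by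
          rw [hA', Finset.card_erase_of_mem hv]
          have : 1 ≤ A.card := Finset.card_pos.mpr ⟨v, hv⟩
          omega
        have hwA' : w ∈ A' := Finset.mem_erase.mpr ⟨hadj.ne', hwA⟩
        have hyA' : y ∈ A' := Finset.mem_erase.mpr ⟨hyv, hyNAw.1⟩
        have t1 : ∀ x ∈ A', x ≠ w →
            A.filter (fun z => G.Adj x z) = A'.filter (fun z => G.Adj x z) := by
          intro x hx hxw
          rw [hA', Finset.filter_erase, Finset.erase_eq_of_notMem]
          intro hmem
          rw [mem_filter] at hmem
          have : x ∈ A.filter (fun z => G.Adj v z) :=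
            mem_filter.mpr ⟨Finset.mem_of_mem_erase hx, hmem.2.symm⟩
          rw [hNAv, Finset.mem_singleton] at this
          exact hxw this
        have t2 : A.filter (fun z => G.Adj w z) = insert v (A'.filter (fun z => G.Adj w z)) := by
          rw [hA', Finset.filter_erase, Finset.insert_erase hvNAw]
        obtain ⟨u', hu'A', Cs', hCs'A', hCs'ne, hu'Cs', hchild', hpar'⟩ := ih A' hA'card
          ⟨w, hwA', y, hyA', hyNAw.2⟩
        by_cases h1 : u' = w
        · subst h1
          refine ⟨u', hwA, insert v Cs', ?_, ⟨v, mem_insert_self v Cs'⟩, ?_, ?_, ?_⟩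
          · intro z hz
            rcases Finset.mem_insert.mp hz with rfl | hz
            · exact hv
            · exact (hCs'A'.trans (Finset.erase_subset _ _)) hz
          · rw [Finset.mem_insert]
            push_neg
            exact ⟨hadj.ne', hu'Cs'⟩
          · intro c hc'
            rcases Finset.mem_insert.mp hc' with rfl | hc'
            · exact ⟨hadj.symm, hNAv⟩
            · refine ⟨(hchild' c hc').1, ?_⟩
              rw [t1 c (hCs'A' hc') (fun h => hu'Cs' (h ▸ hc'))]
              exact (hchild' c hc').2
          · refine le_trans (Finset.card_le_card ?_) hpar'
            intro x hx
            rw [Finset.mem_sdiff, t2, Finset.mem_insert] at hx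
            rw [Finset.mem_sdiff]
            obtain ⟨hx1, hx2⟩ := hx
            rw [Finset.mem_insert] at hx2
            push_neg at hx2
            rcases hx1 with rfl | hx1
            · exact absurd rfl hx2.1
            · exact ⟨hx1, hx2.2⟩
        · by_cases h2 : w ∈ Cs'
          · refine ⟨w, hwA, {v}, Finset.singleton_subset_iff.mpr hv,
              ⟨v, mem_singleton_self v⟩, by simp [hadj.ne'], ?_, ?_⟩
            · intro c hc'
              rw [Finset.mem_singleton] at hc'
              subst hc'
              exact ⟨hadj.symm, hNAv⟩
            · have hNA'w : A'.filter (fun z => G.Adj w z) = {u'} := (hchild' w h2).2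
              refine le_trans (Finset.card_le_card (t := {u'}) ?_) (by simp)
              intro x hx
              rw [Finset.mem_sdiff, t2, hNA'w, Finset.mem_insert, Finset.mem_singleton,
                Finset.mem_singleton] at hx
              rw [Finset.mem_singleton]
              tauto
          · refine ⟨u', Finset.mem_of_mem_erase hu'A', Cs',
              hCs'A'.trans (Finset.erase_subset _ _), hCs'ne, hu'Cs', ?_, ?_⟩
            · intro c hc'
              refine ⟨(hchild' c hc').1, ?_⟩
              rw [t1 c (hCs'A' hc') (fun h => h2 (h ▸ hc'))]
              exact (hchild' c hc').2
            · rw [t1 u' hu'A' h1]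
              exact hpar'

/-- Main lemma: a finite forest with all degrees at most `2k-2` can be properly
colored with exact prescribed near-balanced color class sizes. -/
lemma main_lemma (hG : G.IsAcyclic) {k : ℕ} (hk : 0 < k)
    (hdeg : ∀ v, G.degree v + 2 ≤ 2 * k) :
    ∀ (n : ℕ) (A : Finset V), A.card ≤ n → ∀ f : Fin k → ℕ,
      (∀ i j, f i ≤ f j + 1) → (∑ i, f i) = A.card →
    ∃ C : V → Fin k, (∀ a ∈ A, ∀ b ∈ A, G.Adj a b → C a ≠ C b) ∧
      ∀ i, (A.filter (fun v => C v = i)).card = f i := by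
  intro n
  induction n with
  | zero =>
    intro A hcard f hspread hsum
    obtain ⟨C, hC⟩ := exists_fiber_sizes k hk A f hsum
    refine ⟨C, ?_, hC⟩
    intro a ha
    rw [Nat.le_zero, Finset.card_eq_zero] at hcard
    subst hcard
    exact absurd ha (notMem_empty a)
  | succ n ih =>
    intro A hcard f hspread hsum
    by_cases hedge : ∃ a ∈ A, ∃ b ∈ A, G.Adj a b
    · obtain ⟨u, huA, Cs, hCsA, hCsne, huCs, hchild, hpar⟩ :=
        star_extract G hG (n + 1) A hcard hedge
      set P := (A.filter (fun x => G.Adj u x)) \ Cs with hPdef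
      set T := Cs.card + 1 with hTdef
      clear_value T
      set S := insert u Cs with hSdef
      have hSA : S ⊆ A := Finset.insert_subset_iff.mpr ⟨huA, hCsA⟩
      have hScard : S.card = T := by
        rw [hSdef, Finset.card_insert_of_notMem huCs, hTdef]
      have hT1 : T ≤ A.card := hScard ▸ Finset.card_le_card hSA
      have hsub : Cs ∪ P ⊆ G.neighborFinset u := by
        intro x hx
        rw [SimpleGraph.mem_neighborFinset]
        rcases Finset.mem_union.mp hx with hx | hx
        · exact (hchild x hx).1
        · exact (mem_filter.mp (Finset.mem_sdiff.mp hx).1).2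
      have hdegu : Cs.card + P.card ≤ G.degree u := by
        rw [← SimpleGraph.card_neighborFinset_eq_degree,
          ← Finset.card_union_of_disjoint Finset.disjoint_sdiff]
        exact Finset.card_le_card hsub
      have hCs1 : 1 ≤ Cs.card := Finset.card_pos.mpr hCsne
      have hdegu2 := hdeg u
      have hT2 : T ≤ 2 * k := by omega
      obtain ⟨s, hsle, hssum, hspread', hones⟩ :=
        slot_lemma f hspread (hsum ▸ hT1) hT2
      set A' := A \ S with hA'def
      have hA'card : A'.card = A.card - T := by
        rw [hA'def, Finset.card_sdiff_of_subset hSA, hScard]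
      have hA'le : A'.card ≤ n := by omega
      set f' : Fin k → ℕ := fun i => f i - s i with hf'def
      have hsum' : (∑ i, f' i) = A'.card := by
        have hadd : (∑ i, f' i) + (∑ i, s i) = ∑ i, f i := by
          rw [← Finset.sum_add_distrib]
          exact Finset.sum_congr rfl fun i _ => Nat.sub_add_cancel (hsle i)
        omega
      obtain ⟨C', hC'proper, hC'sizes⟩ := ih A' hA'le f' hspread' hsum'
      -- choose the color for u
      have hPle : P.card ≤ 1 := hpar
      have hjsel : ∃ j_u, s j_u = 1 ∧ ∀ x ∈ P, C' x ≠ j_u := by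
        rcases Nat.le_one_iff_eq_zero_or_eq_one.mp hPle with hPc | hPc
        · have hP0 : P.card = 0 := hPc
          rw [Finset.card_eq_zero] at hPc
          have hmin1 : (1:ℕ) ≤ T := by omega
          have hmin2 : (1:ℕ) ≤ 2 * k - T := by omega
          have hmin : (1:ℕ) ≤ min T (2 * k - T) := le_min hmin1 hmin2
          have h1 : 1 ≤ (univ.filter (fun i => s i = 1)).card := le_trans hmin hones
          obtain ⟨j_u, hj⟩ := Finset.card_pos.mp
            (show 0 < (univ.filter (fun i => s i = 1)).card by omega)
          exact ⟨j_u, (mem_filter.mp hj).2, fun x hx => absurd hx (hPc ▸ notMem_empty x)⟩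
        · have hP1 : P.card = 1 := hPc
          rw [Finset.card_eq_one] at hPc
          obtain ⟨p, hp⟩ := hPc
          have hmin1 : (2:ℕ) ≤ T := by omega
          have hmin2 : (2:ℕ) ≤ 2 * k - T := by omega
          have hmin : (2:ℕ) ≤ min T (2 * k - T) := le_min hmin1 hmin2
          have h2 : 1 < (univ.filter (fun i => s i = 1)).card :=
            lt_of_lt_of_le (by omega) (le_trans hmin hones)
          obtain ⟨j_u, hj, hjne⟩ := Finset.exists_mem_ne h2 (C' p)
          refine ⟨j_u, (mem_filter.mp hj).2, ?_⟩
          intro x hx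
          rw [hp, Finset.mem_singleton] at hx
          subst hx
          exact fun h => hjne h.symm
      obtain ⟨j_u, hj_s, hj_P⟩ := hjsel
      set s' : Fin k → ℕ := fun i => s i - (if i = j_u then 1 else 0) with hs'def
      have hs'sum : (∑ i, s' i) = Cs.card := by
        have hadd : (∑ i, s' i) + (∑ i, (if i = j_u then 1 else 0)) = ∑ i, s i := by
          rw [← Finset.sum_add_distrib]
          refine Finset.sum_congr rfl fun i _ => ?_
          show s i - (if i = j_u then 1 else 0) + (if i = j_u then 1 else 0) = s i
          by_cases hi : i = j_u
          · rw [if_pos hi]; subst hi; omega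
          · rw [if_neg hi]; omega
        have hone : (∑ i, (if i = j_u then (1:ℕ) else 0)) = 1 := by
          rw [Finset.sum_ite_eq' univ j_u (fun _ => 1), if_pos (mem_univ _)]
        omega
      obtain ⟨χ, hχ⟩ := exists_fiber_sizes k hk Cs s' hs'sum
      have hs'j : s' j_u = 0 := by
        show s j_u - (if j_u = j_u then 1 else 0) = 0
        rw [if_pos rfl, hj_s]
      have hχne : ∀ c ∈ Cs, χ c ≠ j_u := by
        intro c hc hcj
        have h0 := hχ j_u
        rw [hs'j, Finset.card_eq_zero] at h0
        have hmem : c ∈ Cs.filter (fun v => χ v = j_u) := mem_filter.mpr ⟨hc, hcj⟩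
        rw [h0] at hmem
        exact absurd hmem (notMem_empty c)
      set C : V → Fin k := fun v => if v = u then j_u else if v ∈ Cs then χ v else C' v
        with hCdef
      have hCu : C u = j_u := by rw [hCdef]; simp
      have hCc : ∀ c ∈ Cs, C c = χ c := by
        intro c hc
        rw [hCdef]
        simp only []
        rw [if_neg (fun h : c = u => huCs (h ▸ hc)), if_pos hc]
      have hCA' : ∀ v ∈ A', C v = C' v := by
        intro v hv
        rw [hA'def, Finset.mem_sdiff, hSdef, Finset.mem_insert] at hv
        push_neg at hv
        rw [hCdef]
        simp only []
        rw [if_neg hv.2.1, if_neg hv.2.2]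
      have huA' : u ∉ A' := by
        rw [hA'def, Finset.mem_sdiff, hSdef]
        simp
      have hCsA' : ∀ c ∈ Cs, c ∉ A' := by
        intro c hc hcA'
        rw [hA'def, Finset.mem_sdiff, hSdef, Finset.mem_insert] at hcA'
        exact hcA'.2 (Or.inr hc)
      have hsplit : ∀ x ∈ A, x = u ∨ x ∈ Cs ∨ x ∈ A' := by
        intro x hx
        by_cases h1 : x = u
        · exact Or.inl h1
        · by_cases h2 : x ∈ Cs
          · exact Or.inr (Or.inl h2)
          · refine Or.inr (Or.inr ?_)
            rw [hA'def, Finset.mem_sdiff, hSdef, Finset.mem_insert]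
            push_neg
            exact ⟨hx, h1, h2⟩
      refine ⟨C, ?_, ?_⟩
      · -- properness
        intro a ha b hb hadj
        have hmemP : ∀ x ∈ A', G.Adj u x → x ∈ P := by
          intro x hx hux
          have hxCs : x ∉ Cs := fun h => hCsA' x h hx
          have hxA : x ∈ A := (Finset.sdiff_subset) hx
          exact Finset.mem_sdiff.mpr ⟨mem_filter.mpr ⟨hxA, hux⟩, hxCs⟩
        have hchildu : ∀ c ∈ Cs, ∀ x ∈ A, G.Adj c x → x = u := by
          intro c hc x hx hcx
          have := (hchild c hc).2
          have hxm : x ∈ A.filter (fun y => G.Adj c y) := mem_filter.mpr ⟨hx, hcx⟩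
          rw [this, Finset.mem_singleton] at hxm
          exact hxm
        rcases hsplit a ha with rfl | haCs | haA' <;> rcases hsplit b hb with rfl | hbCs | hbA'
        · exact absurd rfl hadj.ne
        · rw [hCu, hCc b hbCs]
          exact fun h => hχne b hbCs h.symm
        · rw [hCu, hCA' b hbA']
          exact (hj_P b (hmemP b hbA' hadj)).symm
        · rw [hCu, hCc a haCs]
          exact hχne a haCs
        · exact absurd (hchildu a haCs b hb hadj) (fun h => huCs (h ▸ hbCs))
        · exact absurd (hchildu a haCs b hb hadj) (fun h => huA' (h ▸ hbA'))
        · rw [hCu, hCA' a haA']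
          exact hj_P a (hmemP a haA' hadj.symm)
        · exact absurd (hchildu b hbCs a ha hadj.symm) (fun h => huA' (h ▸ haA'))
        · rw [hCA' a haA', hCA' b hbA']
          exact hC'proper a haA' b hbA' hadj
      · -- sizes
        intro i
        have hAeq : A' ∪ S = A := Finset.sdiff_union_of_subset hSA
        have hdisj : Disjoint (A'.filter (fun v => C v = i)) (S.filter (fun v => C v = i)) :=
          Finset.disjoint_filter_filter Finset.sdiff_disjoint
        rw [← hAeq, Finset.filter_union, Finset.card_union_of_disjoint hdisj]
        have e1 : A'.filter (fun v => C v = i) = A'.filter (fun v => C' v = i) :=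
          Finset.filter_congr (fun x hx => by rw [hCA' x hx])
        have e2 : Cs.filter (fun v => C v = i) = Cs.filter (fun v => χ v = i) :=
          Finset.filter_congr (fun x hx => by rw [hCc x hx])
        rw [e1, hC'sizes]
        rw [hSdef, Finset.filter_insert]
        by_cases hij : i = j_u
        · subst hij
          rw [if_pos hCu, Finset.card_insert_of_notMem
            (fun h => huCs (Finset.mem_of_mem_filter u h)), e2, hχ]
          have h1 := hsle i
          have h3 : f' i = f i - s i := rfl
          omega
        · rw [if_neg (fun h : C u = i => hij (by rw [hCu] at h; exact h.symm)), e2, hχ]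
          have h1 := hsle i
          have h3 : f' i = f i - s i := rfl
          have h4 : s' i = s i - (if i = j_u then 1 else 0) := rfl
          have h5 : (if i = j_u then (1:ℕ) else 0) = 0 := if_neg hij
          omega
    · obtain ⟨C, hC⟩ := exists_fiber_sizes k hk A f hsum
      refine ⟨C, ?_, hC⟩
      intro a ha b hb hadj
      exact absurd ⟨a, ha, b, hb, hadj⟩ hedge

end Helpers

theorem stmt15 {V : Type*} [Fintype V] (G : SimpleGraph V) [DecidableRel G.Adj]
    (hforest : G.IsAcyclic)
    (k : ℕ) (hk : 1 + (G.maxDegree + 1) / 2 ≤ k) :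
    EquitablyColorable G k := by
  classical
  have hk1 : 0 < k := by omega
  have hdeg : ∀ v, G.degree v + 2 ≤ 2 * k := by
    intro v
    have h1 := G.degree_le_maxDegree v
    omega
  set n := Fintype.card V with hn
  set r := n % k with hr
  set f : Fin k → ℕ := fun i => n / k + (if (i : ℕ) < r then 1 else 0) with hf
  have hspread : ∀ i j, f i ≤ f j + 1 := by
    intro i j; simp only [hf]; split <;> split <;> omega
  have hsum : (∑ i, f i) = (univ : Finset V).card := by
    rw [Finset.card_univ, ← hn]
    rw [Fin.sum_univ_eq_sum_range (fun j => n / k + (if j < r then 1 else 0))]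
    rw [Finset.sum_add_distrib, Finset.sum_const, Finset.card_range, smul_eq_mul]
    have hfilt : ((Finset.range k).filter (fun j => j < r)) = Finset.range r := by
      ext j
      simp only [Finset.mem_filter, Finset.mem_range]
      have : r < k := Nat.mod_lt _ hk1
      omega
    have h2 : (∑ x ∈ Finset.range k, if x < r then 1 else 0) = r := by
      rw [Finset.sum_ite, Finset.sum_const_zero, add_zero, Finset.sum_const, hfilt,
        Finset.card_range, smul_eq_mul, mul_one]
    rw [h2]
    have := Nat.div_add_mod n k
    omega
  obtain ⟨C, hproper, hsizes⟩ := main_lemma G hforest hk1 hdeg (Fintype.card V) univ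
    (le_of_eq rfl) f hspread hsum
  refine ⟨C, fun a b hab => hproper a (mem_univ a) b (mem_univ b) hab, ?_⟩
  intro i j
  rw [hsizes i, hsizes j]
  exact hspread i j
end
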